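/- Let (x*, z*, y*) be a saddle point of the Lagrangian l and (xᵏ, zᵏ, yᵏ)_{k≥0} a sequence generated by the AD-PMM algorithm. Then for all k ≥ 1: ‖x^{k+1} − xᵏ‖²_{M₁} + ‖z^{k+1} − zᵏ‖²_{M₂} + c⁻¹‖y^{k+1} − yᵏ‖² + ‖x* − x^{k+1}‖²_{M₁} + ‖z* − z^{k+1}‖²_{M₂ + cI} + c⁻¹‖y* − y^{k+1}‖² + ‖z^{k+1} − zᵏ‖²_{M₂} ≤ ‖x* − xᵏ‖²_{M₁} + ‖z* − zᵏ‖²_{M₂ + cI} + c⁻¹‖y* − yᵏ‖² + ‖zᵏ − z^{k−1}‖²_{M₂}. -/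

import Mathlib

open scoped InnerProductSpace
open Filter

noncomputable section

section OpDefs

variable {E F : Type*} [NormedAddCommGroup E] [InnerProductSpace ℝ E]
  [NormedAddCommGroup F] [InnerProductSpace ℝ F]

/-- `U ∈ S₊(E)`: continuous linear, self-adjoint and positive semidefinite. -/
def IsSplusOp (U : E →L[ℝ] E) : Prop :=
  (∀ x y : E, ⟪U x, y⟫_ℝ = ⟪x, U y⟫_ℝ) ∧ ∀ x : E, 0 ≤ ⟪x, U x⟫_ℝ

/-- The squared seminorm `‖x‖²_U := ⟪x, U x⟫`. -/
def opSq (U : E →L[ℝ] E) (x : E) : ℝ := ⟪x, U x⟫_ℝ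

/-- Loewner order `U ⪰ V`. -/
def opLE (U V : E →L[ℝ] E) : Prop := ∀ x : E, ⟪x, V x⟫_ℝ ≤ ⟪x, U x⟫_ℝ

/-- `U ∈ P_α(E)`, i.e. `U ∈ S₊(E)` and `U ⪰ α·Id`. -/
def IsPalphaOp (α : ℝ) (U : E →L[ℝ] E) : Prop :=
  IsSplusOp U ∧ ∀ x : E, α * ‖x‖ ^ 2 ≤ ⟪x, U x⟫_ℝ

/-- Properness of an extended-real-valued function. -/
def ERealProper (f : E → EReal) : Prop := (∀ x, f x ≠ ⊥) ∧ ∃ x, f x ≠ ⊤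

/-- Convexity of an extended-real-valued function. -/
def ERealConvex (f : E → EReal) : Prop :=
  ∀ x y : E, ∀ a b : ℝ, 0 ≤ a → 0 ≤ b → a + b = 1 →
    f (a • x + b • y) ≤ (a : EReal) * f x + (b : EReal) * f y

/-- Weak convergence of a sequence in a Hilbert space, tested against inner products. -/
def WeakConv (u : ℕ → E) (p : E) : Prop :=
  ∀ w : E, Tendsto (fun k => ⟪u k, w⟫_ℝ) atTop (nhds ⟪p, w⟫_ℝ)

/-- The Lagrangian `l(x,z,y) = f(x) + g(z) + ⟪y, Ax - z⟫`. -/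
def Lagr (f : E → EReal) (g : F → EReal) (A : E →L[ℝ] F) (p : E) (q v : F) : EReal :=
  f p + g q + ((⟪v, A p - q⟫_ℝ : ℝ) : EReal)

/-- The Lagrangian with an additional smooth summand `h`:
`l(x,z,y) = f(x) + h(x) + g(z) + ⟪y, Ax - z⟫`. -/
def LagrH (f : E → EReal) (h : E → ℝ) (g : F → EReal) (A : E →L[ℝ] F)
    (p : E) (q v : F) : EReal :=
  f p + ((h p : ℝ) : EReal) + g q + ((⟪v, A p - q⟫_ℝ : ℝ) : EReal)

/-- `(xs, zs, ys)` is a saddle point of `l`. -/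
def IsSaddle (l : E → F → F → EReal) (xs : E) (zs ys : F) : Prop :=
  ∀ (p : E) (q v : F), l xs zs v ≤ l xs zs ys ∧ l xs zs ys ≤ l p q ys

/-- `xk1` is a minimizer of `u ↦ f u + (c/2)‖Au - zk + c⁻¹ yk‖² + (1/2)‖u - xk‖²_M`. -/
def IsXUpdate (f : E → EReal) (A : E →L[ℝ] F) (c : ℝ) (M : E →L[ℝ] E)
    (xk : E) (zk yk : F) (xk1 : E) : Prop :=
  ∀ u : E,
    f xk1 + (((c/2) * ‖A xk1 - zk + c⁻¹ • yk‖ ^ 2 + (1/2) * opSq M (xk1 - xk) : ℝ) : EReal) ≤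
    f u + (((c/2) * ‖A u - zk + c⁻¹ • yk‖ ^ 2 + (1/2) * opSq M (u - xk) : ℝ) : EReal)

/-- `xk1` is a minimizer of the `x`-subproblem with linearized smooth part:
`u ↦ f u + ⟪u - xk, ∇h(xk)⟫ + (c/2)‖Au - zk + c⁻¹ yk‖² + (1/2)‖u - xk‖²_M`. -/
def IsXUpdateGrad (f : E → EReal) (h' : E → E) (A : E →L[ℝ] F) (c : ℝ) (M : E →L[ℝ] E)
    (xk : E) (zk yk : F) (xk1 : E) : Prop :=
  ∀ u : E,
    f xk1 + ((⟪xk1 - xk, h' xk⟫_ℝ + (c/2) * ‖A xk1 - zk + c⁻¹ • yk‖ ^ 2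
        + (1/2) * opSq M (xk1 - xk) : ℝ) : EReal) ≤
    f u + ((⟪u - xk, h' xk⟫_ℝ + (c/2) * ‖A u - zk + c⁻¹ • yk‖ ^ 2
        + (1/2) * opSq M (u - xk) : ℝ) : EReal)

/-- `zk1` is a minimizer of `w ↦ g w + (c/2)‖Ax - w + c⁻¹ yk‖² + (1/2)‖w - zk‖²_M`. -/
def IsZUpdate (g : F → EReal) (c : ℝ) (M : F →L[ℝ] F)
    (Ax zk yk zk1 : F) : Prop :=
  ∀ w : F,
    g zk1 + (((c/2) * ‖Ax - zk1 + c⁻¹ • yk‖ ^ 2 + (1/2) * opSq M (zk1 - zk) : ℝ) : EReal) ≤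
    g w + (((c/2) * ‖Ax - w + c⁻¹ • yk‖ ^ 2 + (1/2) * opSq M (w - zk) : ℝ) : EReal)

end OpDefs

/-!
Each subproblem minimizes a convex function plus a smooth quadratic, so comparing its value at
the minimizer with the values along the segment towards any point `u` and letting the step go to
zero gives a variational inequality. Written at the saddle point and added to the saddle
inequality `l(x*, z*, y*) ≤ l(x^{k+1}, z^{k+1}, y*)`, these inequalities give an inner-product
estimate. The `z`-inequalities of two consecutive steps add up to the monotonicity of `∂g`, which
bounds the cross term `⟪z^{k+1} - z^k, y^{k+1} - y^k⟫` from below by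
`‖z^{k+1} - z^k‖²_{M₂} / 2 - ‖z^k - z^{k-1}‖²_{M₂} / 2`. The three-point identity
`2⟪a - s, M (a - b)⟫ = ‖s - a‖²_M - ‖s - b‖²_M + ‖a - b‖²_M` then turns everything into
squared distances.
-/

open Topology

section OpSq

variable {E : Type*} [NormedAddCommGroup E] [InnerProductSpace ℝ E] {M : E →L[ℝ] E}

lemma inner_apply_comm (hM : ∀ p q : E, ⟪M p, q⟫_ℝ = ⟪p, M q⟫_ℝ) (p q : E) :
    ⟪p, M q⟫_ℝ = ⟪q, M p⟫_ℝ := by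
  rw [← hM, real_inner_comm]

lemma opSq_id (v : E) : opSq (ContinuousLinearMap.id ℝ E) v = ‖v‖ ^ 2 :=
  real_inner_self_eq_norm_sq v

lemma opSq_add_smul_id (c : ℝ) (v : E) :
    opSq (M + c • ContinuousLinearMap.id ℝ E) v = opSq M v + c * ‖v‖ ^ 2 := by
  simp only [opSq, add_apply, smul_apply, ContinuousLinearMap.id_apply, inner_add_right,
    real_inner_smul_right, real_inner_self_eq_norm_sq]

lemma opSq_add_smul (hM : ∀ p q : E, ⟪M p, q⟫_ℝ = ⟪p, M q⟫_ℝ) (p q : E) (t : ℝ) :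
    opSq M (p + t • q) = opSq M p + 2 * t * ⟪q, M p⟫_ℝ + t ^ 2 * opSq M q := by
  simp only [opSq, map_add, map_smul, inner_add_left, inner_add_right, real_inner_smul_left,
    real_inner_smul_right]
  rw [inner_apply_comm hM p q]
  ring

lemma norm_add_smul_sq (p q : E) (t : ℝ) :
    ‖p + t • q‖ ^ 2 = ‖p‖ ^ 2 + 2 * t * ⟪q, p⟫_ℝ + t ^ 2 * ‖q‖ ^ 2 := by
  simpa only [opSq_id, ContinuousLinearMap.id_apply] using
    opSq_add_smul (M := ContinuousLinearMap.id ℝ E) (fun _ _ => rfl) p q t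

lemma two_mul_inner_sub_eq_opSq (hM : ∀ p q : E, ⟪M p, q⟫_ℝ = ⟪p, M q⟫_ℝ) (a b s : E) :
    2 * ⟪a - s, M (a - b)⟫_ℝ = opSq M (s - a) - opSq M (s - b) + opSq M (a - b) := by
  simp only [opSq, map_sub, inner_sub_left, inner_sub_right]
  rw [inner_apply_comm hM s a, inner_apply_comm hM s b, inner_apply_comm hM b a]
  ring

lemma two_mul_inner_sub_eq_norm_sq (a b s : E) :
    2 * ⟪a - s, a - b⟫_ℝ = ‖s - a‖ ^ 2 - ‖s - b‖ ^ 2 + ‖a - b‖ ^ 2 := by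
  simpa only [opSq_id, ContinuousLinearMap.id_apply] using
    two_mul_inner_sub_eq_opSq (M := ContinuousLinearMap.id ℝ E) (fun _ _ => rfl) a b s

lemma two_mul_inner_le_opSq_add_opSq (hM : IsSplusOp M) (p q : E) :
    2 * ⟪p, M q⟫_ℝ ≤ opSq M p + opSq M q := by
  have h := hM.2 (p - q)
  simp only [map_sub, inner_sub_left, inner_sub_right] at h
  rw [inner_apply_comm hM.1 q p] at h
  unfold opSq
  linarith

end OpSq

lemma ERealProper.exists_eq_coe_of_forall_add_le {E : Type*} {f : E → EReal} (hf : ERealProper f)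
    {h : E → ℝ} {x : E} (hmin : ∀ v, f x + h x ≤ f v + h v) : ∃ r : ℝ, f x = r := by
  obtain ⟨u, hu⟩ := hf.2
  have hlt : f x + h x < ⊤ := (hmin u).trans_lt (EReal.add_lt_top hu (EReal.coe_ne_top _))
  have hx : f x ≠ ⊤ :=
    (EReal.add_ne_top_iff_ne_top_left (EReal.coe_ne_bot _) (EReal.coe_ne_top _)).mp hlt.ne
  exact ⟨(f x).toReal, (EReal.coe_toReal hx (hf.1 x)).symm⟩

section Updates

variable {E F : Type*} [NormedAddCommGroup E] [InnerProductSpace ℝ E]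
  [NormedAddCommGroup F] [InnerProductSpace ℝ F]

lemma ERealConvex.le_add_of_forall_add_le {f : E → EReal} (hf : ERealConvex f) {h : E → ℝ}
    {x u : E} {r s D K : ℝ} (hx : f x = r) (hu : f u = s)
    (hmin : ∀ v, f x + h x ≤ f v + h v)
    (hh : ∀ t : ℝ, h (x + t • (u - x)) = h x + t * D + t ^ 2 * K) : r ≤ s + D := by
  have hseg : ∀ t ∈ Set.Ioc (0 : ℝ) 1, r ≤ s + D + t * K := by
    rintro t ⟨ht0, ht1⟩
    have hconv : f (x + t • (u - x)) ≤ (((1 - t) * r + t * s : ℝ) : EReal) := by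
      have h := hf x u (1 - t) t (by linarith) ht0.le (by ring)
      rwa [hx, hu, show (1 - t) • x + t • u = x + t • (u - x) by module] at h
    have h := (hmin _).trans (add_le_add_left hconv _)
    rw [hx, hh, ← EReal.coe_add, ← EReal.coe_add, EReal.coe_le_coe_iff] at h
    refine le_of_mul_le_mul_left ?_ ht0
    linarith
  have hlim : Tendsto (fun t : ℝ => s + D + t * K) (𝓝[>] 0) (𝓝 (s + D)) := by
    refine tendsto_nhdsWithin_of_tendsto_nhds ?_
    exact (show Continuous (fun t : ℝ => s + D + t * K) by fun_prop).tendsto' 0 _ (by simp)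
  exact ge_of_tendsto hlim (eventually_of_mem (Ioc_mem_nhdsGT one_pos) hseg)

lemma IsXUpdate.exists_eq_coe {f : E → EReal} (hf : ERealProper f) {A : E →L[ℝ] F} {c : ℝ}
    {M : E →L[ℝ] E} {xk x' : E} {zk yk : F} (hx : IsXUpdate f A c M xk zk yk x') :
    ∃ r : ℝ, f x' = r :=
  hf.exists_eq_coe_of_forall_add_le
    (h := fun v => (c/2) * ‖A v - zk + c⁻¹ • yk‖ ^ 2 + (1/2) * opSq M (v - xk)) hx

lemma IsZUpdate.exists_eq_coe {g : F → EReal} (hg : ERealProper g) {c : ℝ} {M : F →L[ℝ] F}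
    {a zk yk z' : F} (hz : IsZUpdate g c M a zk yk z') : ∃ r : ℝ, g z' = r :=
  hg.exists_eq_coe_of_forall_add_le
    (h := fun w => (c/2) * ‖a - w + c⁻¹ • yk‖ ^ 2 + (1/2) * opSq M (w - zk)) hz

lemma IsXUpdate.le_add_inner {f : E → EReal} (hf : ERealConvex f) {A : E →L[ℝ] F} {c : ℝ}
    (hc : c ≠ 0) {M : E →L[ℝ] E} (hM : ∀ p q : E, ⟪M p, q⟫_ℝ = ⟪p, M q⟫_ℝ)
    {xk x' u : E} {zk yk : F} {r s : ℝ} (hx : IsXUpdate f A c M xk zk yk x')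
    (hx' : f x' = r) (hu : f u = s) :
    r ≤ s + (⟪yk + c • (A x' - zk), A (u - x')⟫_ℝ + ⟪u - x', M (x' - xk)⟫_ℝ) := by
  refine hf.le_add_of_forall_add_le
    (h := fun v => (c/2) * ‖A v - zk + c⁻¹ • yk‖ ^ 2 + (1/2) * opSq M (v - xk))
    (K := (c/2) * ‖A (u - x')‖ ^ 2 + (1/2) * opSq M (u - x')) hx' hu hx fun t => ?_
  have hA : A (x' + t • (u - x')) - zk + c⁻¹ • yk = (A x' - zk + c⁻¹ • yk) + t • A (u - x') := by
    rw [map_add, map_smul]; abel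
  have hsub : x' + t • (u - x') - xk = (x' - xk) + t • (u - x') := by abel
  have hy : yk + c • (A x' - zk) = c • (A x' - zk + c⁻¹ • yk) := by
    rw [smul_add, smul_smul, mul_inv_cancel₀ hc, one_smul, add_comm]
  simp only [hA, hsub, norm_add_smul_sq, opSq_add_smul hM, hy, real_inner_smul_left,
    real_inner_comm (A x' - zk + c⁻¹ • yk)]
  ring

lemma IsZUpdate.le_add_inner {g : F → EReal} (hg : ERealConvex g) {c : ℝ} (hc : c ≠ 0)
    {M : F →L[ℝ] F} (hM : ∀ p q : F, ⟪M p, q⟫_ℝ = ⟪p, M q⟫_ℝ)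
    {a zk yk z' y' w : F} {r s : ℝ} (hz : IsZUpdate g c M a zk yk z')
    (hy : y' = yk + c • (a - z')) (hz' : g z' = r) (hw : g w = s) :
    r ≤ s + (⟪y', z' - w⟫_ℝ + ⟪w - z', M (z' - zk)⟫_ℝ) := by
  refine hg.le_add_of_forall_add_le
    (h := fun v => (c/2) * ‖a - v + c⁻¹ • yk‖ ^ 2 + (1/2) * opSq M (v - zk))
    (K := (c/2) * ‖z' - w‖ ^ 2 + (1/2) * opSq M (w - z')) hz' hw hz fun t => ?_
  have ha : a - (z' + t • (w - z')) + c⁻¹ • yk = (a - z' + c⁻¹ • yk) + t • (z' - w) := by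
    module
  have hsub : z' + t • (w - z') - zk = (z' - zk) + t • (w - z') := by abel
  have hy' : y' = c • (a - z' + c⁻¹ • yk) := by
    rw [hy, smul_add, smul_smul, mul_inv_cancel₀ hc, one_smul, add_comm]
  simp only [ha, hsub, norm_add_smul_sq, opSq_add_smul hM, hy', real_inner_smul_left,
    real_inner_comm (a - z' + c⁻¹ • yk)]
  ring

end Updates

section Saddle

variable {E F : Type*} [NormedAddCommGroup E] [InnerProductSpace ℝ E]
  [NormedAddCommGroup F] [InnerProductSpace ℝ F]
  {f : E → EReal} {g : F → EReal} {A : E →L[ℝ] F} {xs : E} {zs ys : F}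

lemma IsSaddle.exists_eq_coe (hsp : IsSaddle (Lagr f g A) xs zs ys) (hf : ERealProper f)
    (hg : ERealProper g) : ∃ a b : ℝ, f xs = a ∧ g zs = b := by
  obtain ⟨u, hu⟩ := hf.2
  obtain ⟨w, hw⟩ := hg.2
  have hlt : f xs + g zs + ((⟪ys, A xs - zs⟫_ℝ : ℝ) : EReal) < ⊤ :=
    (hsp u w ys).2.trans_lt (EReal.add_lt_top (EReal.add_ne_top hu hw) (EReal.coe_ne_top _))
  have hfg : f xs ≠ ⊤ ∧ g zs ≠ ⊤ := (EReal.add_ne_top_iff_ne_top₂ (hf.1 xs) (hg.1 zs)).mp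
    ((EReal.add_ne_top_iff_ne_top_left (EReal.coe_ne_bot _) (EReal.coe_ne_top _)).mp hlt.ne)
  exact ⟨_, _, (EReal.coe_toReal hfg.1 (hf.1 xs)).symm, (EReal.coe_toReal hfg.2 (hg.1 zs)).symm⟩

lemma IsSaddle.le_add_inner (hsp : IsSaddle (Lagr f g A) xs zs ys) {a b a' b' : ℝ}
    (hfa : f xs = a) (hgb : g zs = b) {p : E} {q : F} (hfp : f p = a') (hgq : g q = b') :
    a + b + ⟪ys, A xs - zs⟫_ℝ ≤ a' + b' + ⟪ys, A p - q⟫_ℝ := by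
  have h := (hsp p q ys).2
  simp only [Lagr, hfa, hgb, hfp, hgq] at h
  exact_mod_cast h

lemma IsSaddle.map_eq (hsp : IsSaddle (Lagr f g A) xs zs ys) {a b : ℝ} (hfa : f xs = a)
    (hgb : g zs = b) : A xs = zs := by
  have h := (hsp xs zs (ys + (A xs - zs))).1
  simp only [Lagr, hfa, hgb] at h
  norm_cast at h
  rw [inner_add_left] at h
  exact sub_eq_zero.mp (real_inner_self_nonpos.mp (by linarith))

end Saddle

section ADPMM

variable {E F : Type*} [NormedAddCommGroup E] [InnerProductSpace ℝ E]
  [NormedAddCommGroup F] [InnerProductSpace ℝ F]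
  {f : E → EReal} {g : F → EReal} {A : E →L[ℝ] F} {c : ℝ} {M₁ : E →L[ℝ] E} {M₂ : F →L[ℝ] F}

lemma IsZUpdate.opSq_sub_inner_le (hgp : ERealProper g) (hgc : ERealConvex g) (hc : c ≠ 0)
    (hM : ∀ p q : F, ⟪M₂ p, q⟫_ℝ = ⟪p, M₂ q⟫_ℝ) {a a' z₀ z z' y₀ y y' : F}
    (hz₀ : IsZUpdate g c M₂ a z₀ y₀ z) (hy₀ : y = y₀ + c • (a - z))
    (hz : IsZUpdate g c M₂ a' z y z') (hy : y' = y + c • (a' - z')) :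
    opSq M₂ (z' - z) - ⟪z' - z, M₂ (z - z₀)⟫_ℝ ≤ ⟪z' - z, y' - y⟫_ℝ := by
  obtain ⟨r, hr⟩ := hz₀.exists_eq_coe hgp
  obtain ⟨r', hr'⟩ := hz.exists_eq_coe hgp
  have h := hz.le_add_inner hgc hc hM hy hr' hr
  have h₀ := hz₀.le_add_inner hgc hc hM hy₀ hr hr'
  have hM' : ⟪z - z', M₂ (z' - z)⟫_ℝ = -opSq M₂ (z' - z) := by
    rw [← neg_sub, inner_neg_left, opSq]
  have hy' : ⟪y', z' - z⟫_ℝ + ⟪y, z - z'⟫_ℝ = ⟪z' - z, y' - y⟫_ℝ := by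
    rw [← neg_sub z' z, inner_neg_right, inner_sub_right (z' - z) y' y, real_inner_comm y',
      real_inner_comm y]
    ring
  linarith

lemma adpmm_inner_le (hfp : ERealProper f) (hfc : ERealConvex f) (hgp : ERealProper g)
    (hgc : ERealConvex g) (hc : c ≠ 0) (hM₁ : ∀ p q : E, ⟪M₁ p, q⟫_ℝ = ⟪p, M₁ q⟫_ℝ)
    (hM₂ : ∀ p q : F, ⟪M₂ p, q⟫_ℝ = ⟪p, M₂ q⟫_ℝ) {x x' xs : E} {z z' zs y y' ys : F}
    (hx : IsXUpdate f A c M₁ x z y x') (hz : IsZUpdate g c M₂ (A x') z y z')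
    (hy : y' = y + c • (A x' - z')) (hsp : IsSaddle (Lagr f g A) xs zs ys) :
    ⟪x' - xs, M₁ (x' - x)⟫_ℝ + ⟪z' - zs, M₂ (z' - z)⟫_ℝ + c * ⟪z' - zs, z' - z⟫_ℝ
      + ⟪y' - ys, A x' - z'⟫_ℝ + c * ⟪z' - z, A x' - z'⟫_ℝ ≤ 0 := by
  obtain ⟨a, b, hfa, hgb⟩ := hsp.exists_eq_coe hfp hgp
  have hAxs := hsp.map_eq hfa hgb
  obtain ⟨r, hr⟩ := hx.exists_eq_coe hfp
  obtain ⟨r', hr'⟩ := hz.exists_eq_coe hgp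
  have hX := hx.le_add_inner hfc hc hM₁ hr hfa
  have hZ := hz.le_add_inner hgc hc hM₂ hy hr' hgb
  have hL := hsp.le_add_inner hfa hgb hr hr'
  have hy' : y + c • (A x' - z) = y' + c • (z' - z) := by rw [hy]; module
  rw [hy', map_sub, hAxs] at hX
  rw [hAxs, sub_self, inner_zero_right, add_zero] at hL
  simp only [inner_add_left, inner_sub_left, inner_sub_right, real_inner_smul_left] at hX hZ hL ⊢
  rw [real_inner_comm zs z', real_inner_comm zs z] at hX
  rw [real_inner_comm z z']
  linarith

lemma adpmm_step (hfp : ERealProper f) (hfc : ERealConvex f) (hgp : ERealProper g)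
    (hgc : ERealConvex g) (hc : 0 < c) (hM₁ : ∀ p q : E, ⟪M₁ p, q⟫_ℝ = ⟪p, M₁ q⟫_ℝ)
    (hM₂ : IsSplusOp M₂) {x x' xs : E} {z₀ z z' zs y₀ y y' ys : F}
    (hx : IsXUpdate f A c M₁ x z y x') (hz₀ : IsZUpdate g c M₂ (A x) z₀ y₀ z)
    (hz : IsZUpdate g c M₂ (A x') z y z') (hy₀ : y = y₀ + c • (A x - z))
    (hy : y' = y + c • (A x' - z')) (hsp : IsSaddle (Lagr f g A) xs zs ys) :
    opSq M₁ (x' - x) + opSq M₂ (z' - z) + c⁻¹ * ‖y' - y‖ ^ 2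
      + opSq M₁ (xs - x') + opSq (M₂ + c • ContinuousLinearMap.id ℝ F) (zs - z')
      + c⁻¹ * ‖ys - y'‖ ^ 2 + opSq M₂ (z' - z) ≤
    opSq M₁ (xs - x) + opSq (M₂ + c • ContinuousLinearMap.id ℝ F) (zs - z)
      + c⁻¹ * ‖ys - y‖ ^ 2 + opSq M₂ (z - z₀) := by
  have hstar := adpmm_inner_le hfp hfc hgp hgc hc.ne' hM₁ hM₂.1 hx hz hy hsp
  have hmono := hz₀.opSq_sub_inner_le hgp hgc hc.ne' hM₂.1 hy₀ hz hy
  have he : A x' - z' = c⁻¹ • (y' - y) := by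
    rw [hy, add_sub_cancel_left, smul_smul, inv_mul_cancel₀ hc.ne', one_smul]
  rw [he, real_inner_smul_right, real_inner_smul_right, mul_inv_cancel_left₀ hc.ne'] at hstar
  have hx₁ := two_mul_inner_sub_eq_opSq hM₁ x' x xs
  have hz₂ := two_mul_inner_sub_eq_opSq hM₂.1 z' z zs
  have hz₃ := congrArg (c * ·) (two_mul_inner_sub_eq_norm_sq z' z zs)
  have hy₃ := congrArg (c⁻¹ * ·) (two_mul_inner_sub_eq_norm_sq y' y ys)
  have hcs := two_mul_inner_le_opSq_add_opSq hM₂ (z' - z) (z - z₀)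
  rw [opSq_add_smul_id, opSq_add_smul_id]
  linarith [mul_nonneg hc.le (sq_nonneg ‖z' - z‖)]

end ADPMM

theorem stmt2_general (n m : ℕ)
    (f : EuclideanSpace ℝ (Fin n) → EReal) (g : EuclideanSpace ℝ (Fin m) → EReal)
    (hfp : ERealProper f) (hfc : ERealConvex f)
    (hgp : ERealProper g) (hgc : ERealConvex g)
    (A : EuclideanSpace ℝ (Fin n) →L[ℝ] EuclideanSpace ℝ (Fin m))
    (c : ℝ) (hc : 0 < c)
    (M₁ : EuclideanSpace ℝ (Fin n) →L[ℝ] EuclideanSpace ℝ (Fin n))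
    (M₂ : EuclideanSpace ℝ (Fin m) →L[ℝ] EuclideanSpace ℝ (Fin m))
    (hM₁ : IsSplusOp M₁) (hM₂ : IsSplusOp M₂)
    (x : ℕ → EuclideanSpace ℝ (Fin n)) (z y : ℕ → EuclideanSpace ℝ (Fin m))
    (hx : ∀ k : ℕ, IsXUpdate f A c M₁ (x k) (z k) (y k) (x (k+1)))
    (hz : ∀ k : ℕ, IsZUpdate g c M₂ (A (x (k+1))) (z k) (y k) (z (k+1)))
    (hy : ∀ k : ℕ, y (k+1) = y k + c • (A (x (k+1)) - z (k+1)))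
    (xs : EuclideanSpace ℝ (Fin n)) (zs ys : EuclideanSpace ℝ (Fin m))
    (hsp : IsSaddle (Lagr f g A) xs zs ys) :
    ∀ k : ℕ, 1 ≤ k →
      opSq M₁ (x (k+1) - x k) + opSq M₂ (z (k+1) - z k) + c⁻¹ * ‖y (k+1) - y k‖ ^ 2
        + opSq M₁ (xs - x (k+1))
        + opSq (M₂ + c • ContinuousLinearMap.id ℝ (EuclideanSpace ℝ (Fin m))) (zs - z (k+1))
        + c⁻¹ * ‖ys - y (k+1)‖ ^ 2 + opSq M₂ (z (k+1) - z k) ≤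
      opSq M₁ (xs - x k)
        + opSq (M₂ + c • ContinuousLinearMap.id ℝ (EuclideanSpace ℝ (Fin m))) (zs - z k)
        + c⁻¹ * ‖ys - y k‖ ^ 2 + opSq M₂ (z k - z (k-1)) := by
  intro k hk
  obtain ⟨j, rfl⟩ := Nat.exists_eq_add_of_le' hk
  rw [Nat.add_sub_cancel]
  exact adpmm_step hfp hfc hgp hgc hc hM₁.1 hM₂ (hx (j + 1)) (hz j) (hz (j + 1)) (hy j)
    (hy (j + 1)) hsp

theorem stmt2 (n m : ℕ)
    (f : EuclideanSpace ℝ (Fin n) → EReal) (g : EuclideanSpace ℝ (Fin m) → EReal)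
    (hfp : ERealProper f) (hfc : ERealConvex f) (hfl : LowerSemicontinuous f)
    (hgp : ERealProper g) (hgc : ERealConvex g) (hgl : LowerSemicontinuous g)
    (A : EuclideanSpace ℝ (Fin n) →L[ℝ] EuclideanSpace ℝ (Fin m))
    (c : ℝ) (hc : 0 < c)
    (M₁ : EuclideanSpace ℝ (Fin n) →L[ℝ] EuclideanSpace ℝ (Fin n))
    (M₂ : EuclideanSpace ℝ (Fin m) →L[ℝ] EuclideanSpace ℝ (Fin m))
    (hM₁ : IsSplusOp M₁) (hM₂ : IsSplusOp M₂)
    (x : ℕ → EuclideanSpace ℝ (Fin n)) (z y : ℕ → EuclideanSpace ℝ (Fin m))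
    (hx : ∀ k : ℕ, IsXUpdate f A c M₁ (x k) (z k) (y k) (x (k+1)))
    (hz : ∀ k : ℕ, IsZUpdate g c M₂ (A (x (k+1))) (z k) (y k) (z (k+1)))
    (hy : ∀ k : ℕ, y (k+1) = y k + c • (A (x (k+1)) - z (k+1)))
    (xs : EuclideanSpace ℝ (Fin n)) (zs ys : EuclideanSpace ℝ (Fin m))
    (hsp : IsSaddle (Lagr f g A) xs zs ys) :
    ∀ k : ℕ, 1 ≤ k →
      opSq M₁ (x (k+1) - x k) + opSq M₂ (z (k+1) - z k) + c⁻¹ * ‖y (k+1) - y k‖ ^ 2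
        + opSq M₁ (xs - x (k+1))
        + opSq (M₂ + c • ContinuousLinearMap.id ℝ (EuclideanSpace ℝ (Fin m))) (zs - z (k+1))
        + c⁻¹ * ‖ys - y (k+1)‖ ^ 2 + opSq M₂ (z (k+1) - z k) ≤
      opSq M₁ (xs - x k)
        + opSq (M₂ + c • ContinuousLinearMap.id ℝ (EuclideanSpace ℝ (Fin m))) (zs - z k)
        + c⁻¹ * ‖ys - y k‖ ^ 2 + opSq M₂ (z k - z (k-1)) :=
  stmt2_general n m f g hfp hfc hgp hgc A c hc M₁ M₂ hM₁ hM₂ x z y hx hz hy xs zs ys hsp
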